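/- Let u ∈ Γ = {u : ∀ k, ū ≤ S^k u ≤ u} with u ≠ 1^∞, and write u = 1^j 0 z with j ≥ 1. If additionally u ∈ Ξ = {u : ∀ k, 0u ≤ S^k u ≤ 1u}, then z = u, and consequently u = (1^j 0)^∞. -/

import Mathlib

/-- The shift map: `(shift k u) n = u (n + k)`. -/
def shift (k : ℕ) (u : ℕ → Fin 2) : ℕ → Fin 2 := fun n => u (n + k)

/-- Bitwise complement of a binary sequence. -/
def complSeq (u : ℕ → Fin 2) : ℕ → Fin 2 := fun n => 1 - u n

/-- Prepend a digit to a binary sequence. -/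
def cons (b : Fin 2) (u : ℕ → Fin 2) : ℕ → Fin 2 := fun n => Nat.casesOn n b u

/-- The set Γ of binary sequences with ū ≤ Sᵏu ≤ u (lexicographically) for all k. -/
def Gamma : Set (ℕ → Fin 2) :=
  {u | ∀ k : ℕ, toLex (complSeq u) ≤ toLex (shift k u) ∧ toLex (shift k u) ≤ toLex u}

/-- The set Ξ of binary sequences with 0u ≤ Sᵏu ≤ 1u (lexicographically) for all k. -/
def Xi : Set (ℕ → Fin 2) :=
  {u | ∀ k : ℕ, toLex (cons 0 u) ≤ toLex (shift k u) ∧ toLex (shift k u) ≤ toLex (cons 1 u)}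

/-- The periodic sequence `(1^j 0)^∞`. -/
def perSeq (j : ℕ) : ℕ → Fin 2 := fun n => if n % (j + 1) < j then 1 else 0

/-!
Writing `u = 1^j 0 z`, we have `S^j u = 0z`. The lower bound `0u ≤ S^j u = 0z` of `Ξ` gives
`u ≤ z`, while the upper bound `S^{j+1} u ≤ u` of `Γ` gives `z ≤ u`. Hence `z = u`, i.e. `u` has
period `j + 1`, and its first period is `1^j 0`.
-/

lemma le_of_toLex_cons_le_cons (b : Fin 2) {x y : ℕ → Fin 2}
    (h : toLex (cons b x) ≤ toLex (cons b y)) : toLex x ≤ toLex y := by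
  rcases h.lt_or_eq with ⟨i, hlt, hi⟩ | h
  · cases i with
    | zero => exact absurd hi (lt_irrefl b)
    | succ m => exact le_of_lt ⟨m, fun k hk => hlt (k + 1) (by omega), hi⟩
  · have hxy : x = y := funext fun n => congrFun (congrArg ofLex h) (n + 1)
    exact le_of_eq (congrArg toLex hxy)

lemma shift_eq_cons_shift_succ {u : ℕ → Fin 2} {j : ℕ} {b : Fin 2} (hb : u j = b) :
    shift j u = cons b (shift (j + 1) u) := by
  funext n
  cases n with
  | zero => simpa [shift, cons] using hb
  | succ m => simp only [shift, cons, Nat.add_right_comm m 1 j, Nat.add_assoc]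

lemma eq_perSeq_of_periodic {u : ℕ → Fin 2} {j : ℕ} (hper : Function.Periodic u (j + 1))
    (hones : ∀ i < j, u i = 1) (hzero : u j = 0) : u = perSeq j := by
  funext n
  rw [← hper.map_mod_nat n, perSeq]
  split_ifs with h
  · exact hones _ h
  · have hlt : n % (j + 1) < j + 1 := Nat.mod_lt n (by omega)
    have hj : n % (j + 1) = j := by omega
    rw [hj, hzero]

theorem stmt13_general (u : ℕ → Fin 2) (hu : u ∈ Gamma) (hXi : u ∈ Xi)
    (j : ℕ) (hones : ∀ i < j, u i = 1) (hzero : u j = 0) :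
    shift (j + 1) u = u ∧ u = perSeq j := by
  have hle : toLex u ≤ toLex (shift (j + 1) u) := by
    have h := (hXi j).1
    rw [shift_eq_cons_shift_succ hzero] at h
    exact le_of_toLex_cons_le_cons 0 h
  have hz : shift (j + 1) u = u := congrArg ofLex (le_antisymm (hu (j + 1)).2 hle)
  exact ⟨hz, eq_perSeq_of_periodic (fun n => congrFun hz n) hones hzero⟩

theorem stmt13 (u : ℕ → Fin 2) (hu : u ∈ Gamma) (hXi : u ∈ Xi)
    (j : ℕ) (hj : 1 ≤ j) (hones : ∀ i < j, u i = 1) (hzero : u j = 0) :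
    shift (j + 1) u = u ∧ u = perSeq j :=
  stmt13_general u hu hXi j hones hzero
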